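/- Let π ∈ 𝒫, x ∈ S and r ∈ ℕ be fixed, and suppose the admissible history h̃_r = (x̃_0, ã_0, …, x̃_{r−1}, ã_{r−1}, x̃_r) satisfies P_x^π[I_r = h̃_r] > 0, where I_r := (X_0, A_0, …, X_{r−1}, A_{r−1}, X_r). Define the shifted policy δ by δ_t(·|h_t) := π_{t+r}(·| x̃_0, ã_0, …, x̃_{r−1}, ã_{r−1}, h_t) for t ∈ ℕ and h_t an admissible history. Then J(λ,π,x) ≥ J(λ,δ,x̃_r) ≥ J*(λ,x̃_r). -/

import Mathlib

open scoped Classical BigOperators ENNReal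

namespace RiskSensitive

/-- A (history-dependent, randomized) policy for a finite MDP: given the past
(chronological list of (state, action) pairs) and the current state, it assigns a
probability weight to each action, concentrated on the admissible actions. -/
structure Policy (S A : Type*) [Fintype S] [Fintype A] (Adm : S → Finset A) where
  toFun : List (S × A) → S → A → ℝ
  nonneg : ∀ h s a, 0 ≤ toFun h s a
  sum_one : ∀ h s, ∑ a, toFun h s a = 1
  supp : ∀ h s a, a ∉ Adm s → toFun h s a = 0

variable {S A : Type*} [Fintype S] [Fintype A]
variable (Adm : S → Finset A) (p : S → A → S → ℝ) (C : S → A → ℝ) (lam : ℝ)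

/-- Probability of a finite trajectory (list of (action, next-state) pairs), given the
history so far and the current state. -/
noncomputable def pathProbAux (π : Policy S A Adm) :
    List (S × A) → S → List (A × S) → ℝ
  | _, _, [] => 1
  | hist, x, (a, y) :: rest =>
      π.toFun hist x a * p x a y * pathProbAux π (hist ++ [(x, a)]) y rest

/-- `pathProb π x l` is `P_x^π[A_0 = a_0, X_1 = y_1, …]` for `l = [(a_0,y_1),…]`. -/
noncomputable def pathProb (π : Policy S A Adm) (x : S) (l : List (A × S)) : ℝ :=
  pathProbAux Adm p π [] x l

/-- Probability of a cylinder event depending on the first `n` (action, next-state) pairs. -/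
noncomputable def cylProb (π : Policy S A Adm) (x : S) (n : ℕ)
    (E : (Fin n → A × S) → Prop) : ℝ :=
  ∑ v : Fin n → A × S, if E v then pathProb Adm p π x (List.ofFn v) else 0

/-- The state `X_t` along the trajectory encoded by `l`, starting from `x`. -/
def stateAt (x : S) (l : List (A × S)) (t : ℕ) : S :=
  (l.take t).foldl (fun _ q => q.2) x

/-- The final state of the finite trajectory `l` started at `x`. -/
def lastState (x : S) (l : List (A × S)) : S :=
  l.foldl (fun _ q => q.2) x

/-- `Σ_t w(X_t, A_t)` along the finite trajectory `l` started at `x`. -/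
def costSum (w : S → A → ℝ) : S → List (A × S) → ℝ
  | _, [] => 0
  | x, (a, y) :: rest => w x a + costSum w y rest

/-- `J_n(λ,π,x) = (1/λ) log E_x^π[exp(λ Σ_{t<n} C(X_t,A_t))]`. -/
noncomputable def Jn (π : Policy S A Adm) (x : S) (n : ℕ) : ℝ :=
  (1 / lam) * Real.log (∑ v : Fin n → A × S,
    pathProb Adm p π x (List.ofFn v) * Real.exp (lam * costSum C x (List.ofFn v)))

/-- The risk-sensitive average cost `J(λ,π,x) = limsup_n J_n(λ,π,x)/n`. -/
noncomputable def Javg (π : Policy S A Adm) (x : S) : ℝ :=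
  Filter.limsup (fun n : ℕ => Jn Adm p C lam π x n / n) Filter.atTop

/-- Optimal risk-sensitive average cost `J*(λ,x)`. -/
noncomputable def Jopt (x : S) : ℝ :=
  ⨅ π : Policy S A Adm, Javg Adm p C lam π x

/-- `π` is `ε`-optimal at `x`. -/
def EpsOptimalAt (π : Policy S A Adm) (x : S) (ε : ℝ) : Prop :=
  Javg Adm p C lam π x ≤ Jopt Adm p C lam x + ε

/-- `FirstExit Q v` : the trajectory `v` leaves `{Q}` for the first time exactly at its
last step, i.e. the exit time of `Q` equals `n`. -/
def FirstExit (Q : S → Prop) {n : ℕ} (v : Fin n → A × S) : Prop :=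
  0 < n ∧ (∀ t : Fin n, (t : ℕ) + 1 < n → Q (v t).2) ∧
    ∀ t : Fin n, (t : ℕ) + 1 = n → ¬ Q (v t).2

/-- `E_x^π[ exp(Σ_{t<τ} w(X_t,A_t)) ]` where `τ = min{n ≥ 1 : ¬ Q (X_n)}` is the first
exit time from `Q` (the contribution of `[τ = ∞]` is null when `τ < ∞` a.s.). -/
noncomputable def EexitExp (π : Policy S A Adm) (x : S) (Q : S → Prop)
    (w : S → A → ℝ) : ℝ≥0∞ :=
  ∑' n : ℕ, ∑ v : Fin n → A × S,
    if FirstExit Q v then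
      ENNReal.ofReal (pathProb Adm p π x (List.ofFn v) *
        Real.exp (costSum w x (List.ofFn v)))
    else 0

/-- `E_x^π[ exp(Σ_{t<T} w(X_t,A_t)) ]` with `T` the first positive arrival time to `z`. -/
noncomputable def EhitExp (π : Policy S A Adm) (x z : S) (w : S → A → ℝ) : ℝ≥0∞ :=
  EexitExp Adm p π x (fun y => y ≠ z) w

/-- `E_x^π[T]`, the expected first positive arrival time to `z`, computed as
`Σ_{n≥0} P_x^π[T > n]`. -/
noncomputable def ExpT (π : Policy S A Adm) (x z : S) : ℝ≥0∞ :=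
  ∑' n : ℕ, ENNReal.ofReal
    (cylProb Adm p π x n (fun v => ∀ t : Fin n, (v t).2 ≠ z))

/-- `P_x^π[T > n]`, the probability that `z` is not visited during the first `n` steps. -/
noncomputable def survProb (π : Policy S A Adm) (x z : S) (n : ℕ) : ℝ :=
  cylProb Adm p π x n (fun v => ∀ t : Fin n, (v t).2 ≠ z)

/-- The stationary policy induced by a choice function `f ∈ 𝔽`. -/
noncomputable def stationary (f : S → A) (hf : ∀ s, f s ∈ Adm s) : Policy S A Adm where
  toFun := fun _ s a => if a = f s then 1 else 0
  nonneg := by intro h s a; (try dsimp only); split <;> norm_num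
  sum_one := by intro h s; simp
  supp := by
    intro h s a ha
    try dsimp only
    rw [if_neg]
    intro hEq
    exact ha (hEq ▸ hf s)

/-- The simultaneous Doeblin condition: `E_x^f[T] ≤ M` for every state `x` and every
stationary policy `f`, where `T` is the first positive arrival time to `z`. -/
def Doeblin (z : S) (M : ℝ) : Prop :=
  0 < M ∧ ∀ (x : S) (f : S → A) (hf : ∀ s, f s ∈ Adm s),
    ExpT Adm p (stationary Adm f hf) x z ≤ ENNReal.ofReal M

/-- `B_g(x) = {a ∈ A(x) : g(x) = max{g(y) : p_{xy}(a) > 0}}`. -/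
def Bg (g : S → ℝ) (x : S) : Set A :=
  {a | a ∈ Adm x ∧ g x = sSup (g '' {y | 0 < p x a y})}

/-- The family `𝒢` of functions characterizing `J*(λ,·)`. -/
def Gclass : Set (S → ℝ) :=
  {g | (∀ x, g x = sInf ((fun a => sSup (g '' {y | 0 < p x a y})) '' (Adm x : Set A))) ∧
    ∃ h : S → ℝ, ∀ x,
      sInf ((fun a => Real.exp (lam * C x a) * ∑ y, p x a y * Real.exp (lam * h y)) ''
        Bg Adm p g x) ≤ Real.exp (lam * g x + lam * h x)}

/-- The class `𝒫*` of policies which always select actions in `B*(X_t)`. -/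
def Pstar : Set (Policy S A Adm) :=
  {π | ∀ (x : S) (t : ℕ),
    cylProb Adm p π x (t + 1)
      (fun v => (v (Fin.last t)).1 ∈
        Bg Adm p (Jopt Adm p C lam) (stateAt x (List.ofFn v) t)) = 1}

/-- The deviation function
`h(x) = inf_{π ∈ 𝒫*} (1/λ) log E_x^π[exp(λα Σ_{t<T}(C(X_t,A_t) − J*(λ,X_t)))]`. -/
noncomputable def hdev (z : S) (α : ℝ) (x : S) : EReal :=
  ⨅ π ∈ Pstar Adm p C lam, ((lam⁻¹ : ℝ) : EReal) *
    ENNReal.log (EhitExp Adm p π x z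
      (fun s a => lam * α * (C s a - Jopt Adm p C lam s)))

/-- `ψ(ε) = (1/λ) inf_{δ∈𝒫*} log E_z^δ[exp(λ Σ_{t<T}(C(X_t,A_t) − γ₀ − 2ε))]`. -/
noncomputable def psi (z : S) (ε : ℝ) : EReal :=
  ((lam⁻¹ : ℝ) : EReal) * ⨅ π ∈ Pstar Adm p C lam,
    ENNReal.log (EhitExp Adm p π z z
      (fun s a => lam * (C s a - Jopt Adm p C lam z - 2 * ε)))

/-- `ξ₀ = −(1−α) log β / (λα)`. -/
noncomputable def xi0 (α β : ℝ) : ℝ := -((1 - α) * Real.log β) / (lam * α)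

/-- `ξ₁`: 1 if `J*(λ,·)` is constant, otherwise the minimum gap between distinct
values of `J*(λ,·)`. -/
noncomputable def xi1 : ℝ :=
  if ∀ u v : S, Jopt Adm p C lam u = Jopt Adm p C lam v then 1
  else sInf {d | ∃ u v : S, Jopt Adm p C lam u < Jopt Adm p C lam v ∧
    d = Jopt Adm p C lam v - Jopt Adm p C lam u}

/-- `ξ = min{ξ₀, ξ₁}`. -/
noncomputable def xi (α β : ℝ) : ℝ := min (xi0 lam α β) (xi1 Adm p C lam)

/-- The shifted policy obtained by prefixing the fixed history `pre`. -/
def shiftPolicy (π : Policy S A Adm) (pre : List (S × A)) : Policy S A Adm where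
  toFun := fun h s a => π.toFun (pre ++ h) s a
  nonneg := fun h s a => π.nonneg _ s a
  sum_one := fun h s => π.sum_one _ s
  supp := fun h s a ha => π.supp _ s a ha

/-- The history (list of (state, action) pairs) along the trajectory `l` started at `x`. -/
def histOf : S → List (A × S) → List (S × A)
  | _, [] => []
  | x, (a, y) :: rest => (x, a) :: histOf y rest

/-!
Prefixing the history `l` to a trajectory of the shifted policy `δ` started at `x̃_r` gives a
trajectory of `π` started at `x`, and its weight factorizes as the weight of `l` times its weight
under `δ`. Since the weight `c = P_x^π(l) exp(λ Σ_l C)` of the prefix is positive, this gives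
`E_x^π[exp(λ S_{r+n})] ≥ c E^δ[exp(λ S_n)]`, i.e. `J_n(δ) + λ⁻¹ log c ≤ J_{r+n}(π)`; after dividing
by `n`, the shift by `r` and the constant disappear in the limsup. The second inequality is
`J* = inf J`, which is a genuine bound because every `J(λ,·,·)` is at least `min C`.
-/

open Filter

theorem sum_ofFn_succ {α M : Type*} [Fintype α] [AddCommMonoid M] (n : ℕ) (F : List α → M) :
    ∑ v : Fin (n + 1) → α, F (List.ofFn v) = ∑ q : α, ∑ w : Fin n → α, F (q :: List.ofFn w) := by
  rw [← (Fin.consEquiv fun _ => α).sum_comp, Fintype.sum_prod_type]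
  simp [Fin.consEquiv, List.ofFn_succ]

theorem sum_ofFn_append {α M : Type*} [Fintype α] [AddCommMonoid M] (m n : ℕ) (F : List α → M) :
    ∑ v : Fin (m + n) → α, F (List.ofFn v) =
      ∑ u : Fin m → α, ∑ w : Fin n → α, F (List.ofFn u ++ List.ofFn w) := by
  rw [← (Fin.appendEquiv m n).sum_comp, Fintype.sum_prod_type]
  simp [Fin.appendEquiv, List.ofFn_fin_append]

theorem limsup_div_le_of_add_le_shift {a b : ℕ → ℝ} (r : ℕ) (K : ℝ)
    (ha : IsBoundedUnder (· ≤ ·) atTop fun n : ℕ => a n / n)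
    (hb : IsCoboundedUnder (· ≤ ·) atTop fun n : ℕ => b n / n)
    (hab : ∀ n, b n + K ≤ a (r + n)) :
    limsup (fun n : ℕ => b n / n) atTop ≤ limsup (fun n : ℕ => a n / n) atTop := by
  refine le_of_forall_pos_le_add fun ε hε => ?_
  set L := limsup (fun n : ℕ => a n / n) atTop
  obtain ⟨N, hN⟩ := eventually_atTop.1 (eventually_lt_of_limsup_lt (lt_add_of_pos_right L hε) ha)
  have hg : Tendsto (fun n : ℕ => (L + ε) + ((L + ε) * r - K) / n) atTop (nhds (L + ε)) := by
    simpa using tendsto_const_nhds.add (tendsto_const_div_atTop_nhds_zero_nat ((L + ε) * r - K))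
  refine (limsup_le_limsup (eventually_atTop.2 ⟨N + 1, fun n hn => ?_⟩) hb
    hg.isBoundedUnder_le).trans hg.limsup_eq.le
  have hn : (0 : ℝ) < n := by exact_mod_cast (show 0 < n by omega)
  have hlt := hN (r + n) (by omega)
  rw [div_lt_iff₀ (by exact_mod_cast (show 0 < r + n by omega))] at hlt
  push_cast at hlt
  calc b n / n ≤ ((L + ε) * (r + n) - K) / n :=
        div_le_div_of_nonneg_right (by linarith [hab n]) hn.le
    _ = (L + ε) + ((L + ε) * r - K) / n := by field_simp; ring

section Trajectory

omit [Fintype S] [Fintype A]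

theorem costSum_append (x : S) (l l' : List (A × S)) :
    costSum C x (l ++ l') = costSum C x l + costSum C (lastState x l) l' := by
  induction l generalizing x with
  | nil => simp [costSum, lastState]
  | cons q l ih =>
    simp only [List.cons_append, costSum, ih, lastState, List.foldl_cons]
    ring

theorem le_costSum {m : ℝ} (hm : ∀ s a, m ≤ C s a) (x : S) (l : List (A × S)) :
    m * l.length ≤ costSum C x l := by
  induction l generalizing x with
  | nil => simp [costSum]
  | cons q l ih =>
    simp only [costSum, List.length_cons]
    push_cast
    linarith [hm x q.1, ih q.2]

theorem costSum_le {M : ℝ} (hM : ∀ s a, C s a ≤ M) (x : S) (l : List (A × S)) :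
    costSum C x l ≤ M * l.length := by
  induction l generalizing x with
  | nil => simp [costSum]
  | cons q l ih =>
    simp only [costSum, List.length_cons]
    push_cast
    linarith [hM x q.1, ih q.2]

end Trajectory

theorem pathProbAux_append (π : Policy S A Adm) (hist : List (S × A)) (x : S)
    (l l' : List (A × S)) :
    pathProbAux Adm p π hist x (l ++ l') =
      pathProbAux Adm p π hist x l *
        pathProbAux Adm p π (hist ++ histOf x l) (lastState x l) l' := by
  induction l generalizing hist x with
  | nil => simp [pathProbAux, histOf, lastState]
  | cons q l ih =>
    simp only [List.cons_append, pathProbAux, ih, histOf, List.append_assoc, List.nil_append,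
      lastState, List.foldl_cons]
    ring

theorem pathProbAux_shiftPolicy (π : Policy S A Adm) (pre hist : List (S × A)) (x : S)
    (l : List (A × S)) :
    pathProbAux Adm p (shiftPolicy Adm π pre) hist x l =
      pathProbAux Adm p π (pre ++ hist) x l := by
  induction l generalizing hist x with
  | nil => rfl
  | cons q l ih =>
    simp only [pathProbAux, ih, List.append_assoc]
    rfl

theorem pathProb_append (π : Policy S A Adm) (x : S) (l l' : List (A × S)) :
    pathProb Adm p π x (l ++ l') =
      pathProb Adm p π x l *
        pathProb Adm p (shiftPolicy Adm π (histOf x l)) (lastState x l) l' := by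
  simp only [pathProb, pathProbAux_append, pathProbAux_shiftPolicy, List.nil_append,
    List.append_nil]

def IsStochasticKernel : Prop :=
  ∀ x, ∀ a ∈ Adm x, (∀ y, 0 ≤ p x a y) ∧ ∑ y, p x a y = 1

section Probability

variable {Adm p}

theorem pathProbAux_nonneg (hp : IsStochasticKernel Adm p) (π : Policy S A Adm)
    (hist : List (S × A)) (x : S) (l : List (A × S)) : 0 ≤ pathProbAux Adm p π hist x l := by
  induction l generalizing hist x with
  | nil => simp [pathProbAux]
  | cons q l ih =>
    obtain ⟨a, y⟩ := q
    by_cases ha : a ∈ Adm x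
    · exact mul_nonneg (mul_nonneg (π.nonneg _ _ _) ((hp x a ha).1 y)) (ih _ _)
    · simp [pathProbAux, π.supp _ _ _ ha]

theorem sum_policy_mul_transition (hp : IsStochasticKernel Adm p) (π : Policy S A Adm)
    (hist : List (S × A)) (x : S) :
    ∑ q : A × S, π.toFun hist x q.1 * p x q.1 q.2 = 1 := by
  rw [Fintype.sum_prod_type]
  calc ∑ a, ∑ y, π.toFun hist x a * p x a y = ∑ a, π.toFun hist x a := by
        refine Finset.sum_congr rfl fun a _ => ?_
        by_cases ha : a ∈ Adm x
        · rw [← Finset.mul_sum, (hp x a ha).2, mul_one]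
        · simp [π.supp _ _ _ ha]
    _ = 1 := π.sum_one hist x

theorem sum_pathProbAux_ofFn (hp : IsStochasticKernel Adm p) (π : Policy S A Adm) (n : ℕ)
    (hist : List (S × A)) (x : S) :
    ∑ v : Fin n → A × S, pathProbAux Adm p π hist x (List.ofFn v) = 1 := by
  induction n generalizing hist x with
  | zero => simp [pathProbAux]
  | succ n ih =>
    rw [sum_ofFn_succ]
    simp only [pathProbAux, ← Finset.mul_sum, ih, mul_one]
    exact sum_policy_mul_transition hp π hist x

theorem sum_pathProb_ofFn (hp : IsStochasticKernel Adm p) (π : Policy S A Adm) (x : S)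
    (n : ℕ) : ∑ v : Fin n → A × S, pathProb Adm p π x (List.ofFn v) = 1 :=
  sum_pathProbAux_ofFn hp π n [] x

variable (Adm p) in
noncomputable def expMoment (π : Policy S A Adm) (x : S) (n : ℕ) : ℝ :=
  ∑ v : Fin n → A × S,
    pathProb Adm p π x (List.ofFn v) * Real.exp (lam * costSum C x (List.ofFn v))

theorem Jn_eq_log_expMoment (π : Policy S A Adm) (x : S) (n : ℕ) :
    Jn Adm p C lam π x n = 1 / lam * Real.log (expMoment Adm p C lam π x n) := rfl

theorem expMoment_pos (hp : IsStochasticKernel Adm p) (π : Policy S A Adm) (x : S) (n : ℕ) :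
    0 < expMoment Adm p C lam π x n := by
  obtain ⟨v, -, hv⟩ := Finset.exists_lt_of_sum_lt (s := Finset.univ) (f := 0)
    (g := fun v : Fin n → A × S => pathProb Adm p π x (List.ofFn v))
    (by simp [sum_pathProb_ofFn hp])
  exact Finset.sum_pos'
    (fun w _ => mul_nonneg (pathProbAux_nonneg hp π _ _ _) (Real.exp_pos _).le)
    ⟨v, Finset.mem_univ _, mul_pos hv (Real.exp_pos _)⟩

theorem exp_le_expMoment (hp : IsStochasticKernel Adm p) (hlam : 0 ≤ lam) {m : ℝ}
    (hm : ∀ s a, m ≤ C s a) (π : Policy S A Adm) (x : S) (n : ℕ) :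
    Real.exp (lam * (m * n)) ≤ expMoment Adm p C lam π x n := by
  calc Real.exp (lam * (m * n))
      = ∑ v : Fin n → A × S, pathProb Adm p π x (List.ofFn v) * Real.exp (lam * (m * n)) := by
        rw [← Finset.sum_mul, sum_pathProb_ofFn hp, one_mul]
    _ ≤ expMoment Adm p C lam π x n := by
        refine Finset.sum_le_sum fun v _ =>
          mul_le_mul_of_nonneg_left ?_ (pathProbAux_nonneg hp π _ _ _)
        gcongr
        simpa using le_costSum C hm x (List.ofFn v)

theorem expMoment_le_exp (hp : IsStochasticKernel Adm p) (hlam : 0 ≤ lam) {M : ℝ}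
    (hM : ∀ s a, C s a ≤ M) (π : Policy S A Adm) (x : S) (n : ℕ) :
    expMoment Adm p C lam π x n ≤ Real.exp (lam * (M * n)) := by
  calc expMoment Adm p C lam π x n
      ≤ ∑ v : Fin n → A × S, pathProb Adm p π x (List.ofFn v) * Real.exp (lam * (M * n)) := by
        refine Finset.sum_le_sum fun v _ =>
          mul_le_mul_of_nonneg_left ?_ (pathProbAux_nonneg hp π _ _ _)
        gcongr
        simpa using costSum_le C hM x (List.ofFn v)
    _ = Real.exp (lam * (M * n)) := by
        rw [← Finset.sum_mul, sum_pathProb_ofFn hp, one_mul]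

theorem mul_le_Jn (hp : IsStochasticKernel Adm p) (hlam : 0 < lam) {m : ℝ}
    (hm : ∀ s a, m ≤ C s a) (π : Policy S A Adm) (x : S) (n : ℕ) :
    m * n ≤ Jn Adm p C lam π x n := by
  have h := (Real.le_log_iff_exp_le (expMoment_pos C lam hp π x n)).2
    (exp_le_expMoment C lam hp hlam.le hm π x n)
  rw [Jn_eq_log_expMoment, one_div, ← div_eq_inv_mul, le_div_iff₀ hlam]
  linarith

theorem Jn_le_mul (hp : IsStochasticKernel Adm p) (hlam : 0 < lam) {M : ℝ}
    (hM : ∀ s a, C s a ≤ M) (π : Policy S A Adm) (x : S) (n : ℕ) :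
    Jn Adm p C lam π x n ≤ M * n := by
  have h := (Real.log_le_iff_le_exp (expMoment_pos C lam hp π x n)).2
    (expMoment_le_exp C lam hp hlam.le hM π x n)
  rw [Jn_eq_log_expMoment, one_div, ← div_eq_inv_mul, div_le_iff₀ hlam]
  linarith

theorem isBoundedUnder_le_Jn_div (hp : IsStochasticKernel Adm p) (hlam : 0 < lam)
    (π : Policy S A Adm) (x : S) :
    IsBoundedUnder (· ≤ ·) atTop fun n : ℕ => Jn Adm p C lam π x n / n := by
  obtain ⟨M, hM⟩ := Finite.exists_le fun q : S × A => C q.1 q.2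
  refine isBoundedUnder_of_eventually_le (a := M) (eventually_atTop.2 ⟨1, fun n hn => ?_⟩)
  rw [div_le_iff₀ (by exact_mod_cast hn)]
  exact Jn_le_mul C lam hp hlam (fun s a => hM (s, a)) π x n

theorem le_Jn_div (hp : IsStochasticKernel Adm p) (hlam : 0 < lam) {m : ℝ}
    (hm : ∀ s a, m ≤ C s a) (π : Policy S A Adm) (x : S) :
    ∀ᶠ n : ℕ in atTop, m ≤ Jn Adm p C lam π x n / n :=
  eventually_atTop.2 ⟨1, fun n hn => (le_div_iff₀ (by exact_mod_cast hn)).2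
    (mul_le_Jn C lam hp hlam hm π x n)⟩

theorem isCoboundedUnder_le_Jn_div (hp : IsStochasticKernel Adm p) (hlam : 0 < lam)
    (π : Policy S A Adm) (x : S) :
    IsCoboundedUnder (· ≤ ·) atTop fun n : ℕ => Jn Adm p C lam π x n / n := by
  obtain ⟨m, hm⟩ := Finite.exists_ge fun q : S × A => C q.1 q.2
  exact (isBoundedUnder_of_eventually_ge
    (le_Jn_div C lam hp hlam (fun s a => hm (s, a)) π x)).isCoboundedUnder_le

theorem Jopt_le_Javg (hp : IsStochasticKernel Adm p) (hlam : 0 < lam) (π : Policy S A Adm)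
    (x : S) : Jopt Adm p C lam x ≤ Javg Adm p C lam π x := by
  obtain ⟨m, hm⟩ := Finite.exists_ge fun q : S × A => C q.1 q.2
  refine ciInf_le ⟨m, Set.forall_mem_range.2 fun π' => ?_⟩ π
  exact le_limsup_of_frequently_le
    (le_Jn_div C lam hp hlam (fun s a => hm (s, a)) π' x).frequently
    (isBoundedUnder_le_Jn_div C lam hp hlam π' x)

theorem mul_expMoment_shiftPolicy_le (hp : IsStochasticKernel Adm p) (π : Policy S A Adm)
    (x : S) (l : List (A × S)) (n : ℕ) :
    pathProb Adm p π x l * Real.exp (lam * costSum C x l) *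
        expMoment Adm p C lam (shiftPolicy Adm π (histOf x l)) (lastState x l) n ≤
      expMoment Adm p C lam π x (l.length + n) := by
  set F : List (A × S) → ℝ := fun l' => pathProb Adm p π x l' * Real.exp (lam * costSum C x l')
  have hF : ∀ l', 0 ≤ F l' := fun l' =>
    mul_nonneg (pathProbAux_nonneg hp π _ _ _) (Real.exp_pos _).le
  calc _ = ∑ w : Fin n → A × S, F (List.ofFn l.get ++ List.ofFn w) := by
        rw [expMoment, Finset.mul_sum]
        refine Finset.sum_congr rfl fun w _ => ?_
        simp only [F, List.ofFn_get, pathProb_append, costSum_append, mul_add, Real.exp_add]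
        ring
    _ ≤ ∑ u : Fin l.length → A × S, ∑ w : Fin n → A × S, F (List.ofFn u ++ List.ofFn w) :=
        Finset.single_le_sum (f := fun u => ∑ w : Fin n → A × S, F (List.ofFn u ++ List.ofFn w))
          (fun u _ => Finset.sum_nonneg fun w _ => hF _) (Finset.mem_univ l.get)
    _ = expMoment Adm p C lam π x (l.length + n) := (sum_ofFn_append _ _ F).symm

theorem Jn_shiftPolicy_add_le (hp : IsStochasticKernel Adm p) (hlam : 0 < lam)
    (π : Policy S A Adm) (x : S) (l : List (A × S)) (hl : 0 < pathProb Adm p π x l) (n : ℕ) :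
    Jn Adm p C lam (shiftPolicy Adm π (histOf x l)) (lastState x l) n +
        1 / lam * Real.log (pathProb Adm p π x l * Real.exp (lam * costSum C x l)) ≤
      Jn Adm p C lam π x (l.length + n) := by
  have hc : 0 < pathProb Adm p π x l * Real.exp (lam * costSum C x l) :=
    mul_pos hl (Real.exp_pos _)
  have hδ := expMoment_pos C lam hp (shiftPolicy Adm π (histOf x l)) (lastState x l) n
  rw [Jn_eq_log_expMoment, Jn_eq_log_expMoment, ← mul_add, ← Real.log_mul hδ.ne' hc.ne',
    mul_comm _ (pathProb _ _ _ _ _ * _)]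
  gcongr
  exact mul_expMoment_shiftPolicy_le C lam hp π x l n

end Probability

theorem shifted_policy_bound
    (hp : ∀ (x : S), ∀ a ∈ Adm x, (∀ y, 0 ≤ p x a y) ∧ (∑ y, p x a y) = 1)
    (hlam : 0 < lam)
    (π : Policy S A Adm) (x : S) (l : List (A × S))
    (hl : 0 < pathProb Adm p π x l) :
    Javg Adm p C lam (shiftPolicy Adm π (histOf x l)) (lastState x l) ≤
        Javg Adm p C lam π x ∧
      Jopt Adm p C lam (lastState x l) ≤
        Javg Adm p C lam (shiftPolicy Adm π (histOf x l)) (lastState x l) := by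
  refine ⟨?_, Jopt_le_Javg C lam hp hlam _ _⟩
  exact limsup_div_le_of_add_le_shift l.length _ (isBoundedUnder_le_Jn_div C lam hp hlam π x)
    (isCoboundedUnder_le_Jn_div C lam hp hlam _ _) (Jn_shiftPolicy_add_le C lam hp hlam π x l hl)

end RiskSensitive
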